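/- arXiv:1509.03268 — 5 statements merged into one kernel-verified Lean document; each statement's English description precedes it below -/
import Mathlib

section
/- Let r ≥ 2 and let H be an r-uniform hypergraph on n vertices such that every set of r+1 vertices contains at most 2 hyperedges. Then the number of hyperedges of H is at most (n/r²)·C(n, r-1). -/
/-!
Let `d(S)` be the number of edges containing an `(r-1)`-set `S`. Double counting gives
`∑ d(S) = r |H|`, and `∑ d(S)² = ∑_{A ∈ H} ∑_{S ⊆ A} d(S)`. For a fixed edge `A`, every other
edge `B` meeting `A` in `r - 1` vertices lies in `A ∪ (B \ A)`, an `(r+1)`-set that already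
contains `A`; so `B` is determined by the vertex `B \ A ∉ A`, whence `∑_{S ⊆ A} d(S) ≤ r + (n - r)`.
Cauchy–Schwarz then yields `(r |H|)² ≤ C(n, r-1) · n |H|`.
-/

open Finset

section

variable {V : Type*} [DecidableEq V]

def setDegree (H : Finset (Finset V)) (S : Finset V) : ℕ := #{B ∈ H | S ⊆ B}

lemma filter_powersetCard_subset_eq (T B : Finset V) (k : ℕ) :
    {S ∈ T.powersetCard k | S ⊆ B} = (T ∩ B).powersetCard k := by
  ext S
  simp [mem_powersetCard, subset_inter_iff, and_assoc, and_comm]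

lemma sum_setDegree_powersetCard (H : Finset (Finset V)) (T : Finset V) (k : ℕ) :
    ∑ S ∈ T.powersetCard k, setDegree H S = ∑ B ∈ H, (#(T ∩ B)).choose k := by
  simp only [setDegree, card_filter]
  rw [sum_comm]
  refine sum_congr rfl fun B _ => ?_
  rw [← card_filter, filter_powersetCard_subset_eq, card_powersetCard]

lemma sum_setDegree_sq [Fintype V] (H : Finset (Finset V)) (k : ℕ) :
    ∑ S ∈ univ.powersetCard k, setDegree H S ^ 2
      = ∑ A ∈ H, ∑ S ∈ A.powersetCard k, setDegree H S := by
  have expand : ∀ S, setDegree H S ^ 2 = ∑ A ∈ H, if S ⊆ A then setDegree H S else 0 := by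
    intro S
    rw [← sum_filter, sum_const, smul_eq_mul, sq]
    rfl
  simp only [expand]
  rw [sum_comm]
  refine sum_congr rfl fun A _ => ?_
  rw [← sum_filter, filter_powersetCard_subset_eq, univ_inter]

lemma choose_card_inter_pred {r : ℕ} {A B : Finset V} (hA : #A = r) (hB : #B = r)
    (hBA : B ≠ A) :
    (#(A ∩ B)).choose (r - 1) = if #(B \ A) = 1 then 1 else 0 := by
  have hpart : #(B \ A) + #(A ∩ B) = r := by
    rw [inter_comm, card_sdiff_add_card_inter, hB]
  have hne : (B \ A).Nonempty :=
    sdiff_nonempty.2 fun hsub => hBA (eq_of_subset_of_card_le hsub (by omega))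
  have hpos := hne.card_pos
  split_ifs with h
  · rw [show #(A ∩ B) = r - 1 by omega, Nat.choose_self]
  · exact Nat.choose_eq_zero_of_lt (by omega)

variable {r : ℕ} {H : Finset (Finset V)}

lemma injOn_sdiff_of_card_sdiff_eq_one
    (hspan : ∀ X : Finset V, #X = r + 1 → #{s ∈ H | s ⊆ X} ≤ 2)
    {A : Finset V} (hAH : A ∈ H) (hA : #A = r) :
    Set.InjOn (· \ A) ↑({B ∈ H.erase A | #(B \ A) = 1} : Finset (Finset V)) := by
  intro B hB C hC hBC
  simp only [mem_coe, mem_filter, mem_erase] at hB hC hBC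
  obtain ⟨⟨hBA, hBH⟩, hB1⟩ := hB
  obtain ⟨⟨hCA, hCH⟩, -⟩ := hC
  obtain ⟨x, hx⟩ := card_eq_one.1 hB1
  have hxA : x ∉ A := (mem_sdiff.1 (hx ▸ mem_singleton_self x)).2
  have hsub : ∀ {D}, D \ A = {x} → D ⊆ insert x A := fun hD => by
    rw [insert_eq, ← hD, sdiff_union_self_eq_union]
    exact subset_union_left
  by_contra hne
  have hthree : #({A, B, C} : Finset (Finset V)) = 3 :=
    card_eq_three.2 ⟨A, B, C, Ne.symm hBA, Ne.symm hCA, hne, rfl⟩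
  have hspanned : {A, B, C} ⊆ {s ∈ H | s ⊆ insert x A} := by
    intro D hD
    simp only [mem_insert, mem_singleton] at hD
    rcases hD with rfl | rfl | rfl
    · exact mem_filter.2 ⟨hAH, subset_insert x D⟩
    · exact mem_filter.2 ⟨hBH, hsub hx⟩
    · exact mem_filter.2 ⟨hCH, hsub (hBC ▸ hx)⟩
  have := (card_le_card hspanned).trans (hspan _ (by rw [card_insert_of_notMem hxA, hA]))
  omega

lemma sum_setDegree_powersetCard_pred_le [Fintype V]
    (hspan : ∀ X : Finset V, #X = r + 1 → #{s ∈ H | s ⊆ X} ≤ 2) (hr : 1 ≤ r)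
    (huniform : ∀ s ∈ H, #s = r) {A : Finset V} (hAH : A ∈ H) :
    ∑ S ∈ A.powersetCard (r - 1), setDegree H S ≤ Fintype.card V := by
  have hA := huniform A hAH
  have hrn : r ≤ Fintype.card V := hA ▸ card_le_univ A
  have hothers :
      ∑ B ∈ H.erase A, (#(A ∩ B)).choose (r - 1) = #{B ∈ H.erase A | #(B \ A) = 1} := by
    rw [card_filter]
    refine sum_congr rfl fun B hB => ?_
    exact choose_card_inter_pred hA (huniform B (mem_of_mem_erase hB)) (ne_of_mem_erase hB)
  have hinj : #{B ∈ H.erase A | #(B \ A) = 1} ≤ Fintype.card V - r := by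
    calc #{B ∈ H.erase A | #(B \ A) = 1} ≤ #(Aᶜ.powersetCard 1) := by
          refine card_le_card_of_injOn (· \ A) (fun B hB => ?_)
            (injOn_sdiff_of_card_sdiff_eq_one hspan hAH hA)
          rw [mem_coe, mem_filter] at hB
          rw [mem_coe, mem_powersetCard]
          exact ⟨fun y hy => mem_compl.2 (mem_sdiff.1 hy).2, hB.2⟩
      _ = Fintype.card V - r := by
          rw [card_powersetCard, card_compl, hA, Nat.choose_one_right]
  have hself : (#(A ∩ A)).choose (r - 1) = r := by
    rw [inter_self, hA, Nat.choose_symm hr, Nat.choose_one_right]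
  rw [sum_setDegree_powersetCard, ← add_sum_erase _ _ hAH, hself, hothers]
  omega

theorem sq_mul_card_le_mul_choose [Fintype V]
    (hspan : ∀ X : Finset V, #X = r + 1 → #{s ∈ H | s ⊆ X} ≤ 2) (hr : 1 ≤ r)
    (huniform : ∀ s ∈ H, #s = r) :
    r ^ 2 * #H ≤ Fintype.card V * (Fintype.card V).choose (r - 1) := by
  set n := Fintype.card V
  have hsum : ∑ S ∈ univ.powersetCard (r - 1), setDegree H S = r * #H := by
    rw [sum_setDegree_powersetCard, sum_congr rfl fun B hB => by
      rw [univ_inter, huniform B hB, Nat.choose_symm hr, Nat.choose_one_right], sum_const,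
      smul_eq_mul, mul_comm]
  have hsq : ∑ S ∈ univ.powersetCard (r - 1), setDegree H S ^ 2 ≤ n * #H := by
    rw [sum_setDegree_sq, mul_comm, ← smul_eq_mul, ← sum_const]
    exact sum_le_sum fun A hA => sum_setDegree_powersetCard_pred_le hspan hr huniform hA
  have hcs : (r * #H) ^ 2 ≤ n.choose (r - 1) * (n * #H) := by
    have := sq_sum_le_card_mul_sum_sq (s := univ.powersetCard (r - 1)) (f := setDegree H)
    rw [hsum, card_powersetCard, card_univ] at this
    exact this.trans (Nat.mul_le_mul_left _ hsq)
  rcases Nat.eq_zero_or_pos #H with hH | hH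
  · simp [hH]
  · refine Nat.le_of_mul_le_mul_right ?_ hH
    calc r ^ 2 * #H * #H = (r * #H) ^ 2 := by ring
      _ ≤ n.choose (r - 1) * (n * #H) := hcs
      _ = n * n.choose (r - 1) * #H := by ring

end

theorem stmt13 (V : Type*) [Fintype V] [DecidableEq V] (r : ℕ) (hr : 2 ≤ r)
    (H : Finset (Finset V)) (huniform : ∀ s ∈ H, s.card = r)
    (hspan : ∀ X : Finset V, X.card = r + 1 → (H.filter (fun s => s ⊆ X)).card ≤ 2) :
    (H.card : ℚ) ≤ (Fintype.card V : ℚ) / r ^ 2 * (Fintype.card V).choose (r - 1) := by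
  have hbound := sq_mul_card_le_mul_choose hspan (by omega) huniform
  have hr2 : (0 : ℚ) < r ^ 2 := by positivity
  rw [div_mul_eq_mul_div, le_div_iff₀ hr2, mul_comm]
  exact_mod_cast hbound
end

section
/- Let r ≥ 2 and let H be an r-uniform hypergraph on n vertices such that every set of r+1 vertices contains at most 2 hyperedges. If the number of hyperedges equals (n/r²)·C(n, r-1), then every set of r-1 vertices is contained in exactly n/r hyperedges. -/
open Finset

theorem stmt14 (V : Type*) [Fintype V] [DecidableEq V] (r : ℕ) (hr : 2 ≤ r)
    (H : Finset (Finset V)) (huniform : ∀ s ∈ H, s.card = r)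
    (hspan : ∀ X : Finset V, X.card = r + 1 → (H.filter (fun s => s ⊆ X)).card ≤ 2)
    (hmax : (H.card : ℚ) = (Fintype.card V : ℚ) / r ^ 2 * (Fintype.card V).choose (r - 1)) :
    ∀ s : Finset V, s.card = r - 1 →
      (((H.filter (fun e => s ⊆ e)).card : ℚ) = (Fintype.card V : ℚ) / r) := by
  classical
  intro s₀ hs₀
  set n := Fintype.card V with hn
  set d : Finset V → ℕ := fun s => (H.filter (fun e => s ⊆ e)).card with hd
  set L : Finset V → Finset V := fun s => univ.filter (fun v => insert v s ∈ H) with hL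
  set N : Finset (Finset V) := Finset.powersetCard (r - 1) univ with hNdef
  have hrpos : 0 < r := by omega
  -- the link of an (r-1)-set has the same size as the number of edges containing it
  have hlink : ∀ s : Finset V, s.card = r - 1 → d s = (L s).card := by
    intro s hs
    have : (L s).card = d s := by
      apply Finset.card_bij (fun v _ => insert v s)
      · intro v hv
        simp only [hL, mem_filter, mem_univ, true_and] at hv
        simp only [hd, mem_filter]
        exact ⟨hv, subset_insert _ _⟩
      · intro v hv w hw h
        simp only [hL, mem_filter, mem_univ, true_and] at hv hw
        have hvs : v ∉ s := by
          intro hvs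
          have := huniform _ hv
          rw [Finset.insert_eq_self.mpr hvs] at this
          omega
        have : v ∈ insert w s := h ▸ mem_insert_self v s
        rcases mem_insert.mp this with h' | h'
        · exact h'
        · exact absurd h' hvs
      · intro e he
        simp only [hd, mem_filter] at he
        obtain ⟨heH, hse⟩ := he
        have hec : e.card = r := huniform _ heH
        have hcard : (e \ s).card = 1 := by
          rw [card_sdiff_of_subset hse, hec, hs]; omega
        obtain ⟨v, hv⟩ := card_eq_one.mp hcard
        have hvmem : v ∈ e ∧ v ∉ s := by
          have : v ∈ e \ s := hv ▸ mem_singleton_self v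
          exact ⟨(mem_sdiff.mp this).1, (mem_sdiff.mp this).2⟩
        have heq : insert v s = e := by
          apply Finset.eq_of_subset_of_card_le
          · exact insert_subset hvmem.1 hse
          · rw [card_insert_of_notMem hvmem.2, hs, hec]; omega
        refine ⟨v, ?_, heq⟩
        simp only [hL, mem_filter, mem_univ, true_and]
        rw [heq]; exact heH
    exact this.symm
  -- key local bound: for each edge, the links of its (r-1)-subsets are disjoint
  have hB : ∀ e ∈ H, ∑ s ∈ Finset.powersetCard (r - 1) e, d s ≤ n := by
    intro e he
    have hec : e.card = r := huniform e he
    have hdis : ∀ s ∈ Finset.powersetCard (r - 1) e, ∀ t ∈ Finset.powersetCard (r - 1) e,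
        s ≠ t → Disjoint (L s) (L t) := by
      intro s hs t ht hst
      rw [Finset.disjoint_left]
      intro v hvs hvt
      simp only [hL, mem_filter, mem_univ, true_and] at hvs hvt
      rw [mem_powersetCard] at hs ht
      have hvns : v ∉ s := by
        intro h
        have := huniform _ hvs
        rw [Finset.insert_eq_self.mpr h] at this
        omega
      have hvnt : v ∉ t := by
        intro h
        have := huniform _ hvt
        rw [Finset.insert_eq_self.mpr h] at this
        omega
      by_cases hve : v ∈ e
      · have h1 : insert v s = e := by
          apply Finset.eq_of_subset_of_card_le (insert_subset hve hs.1)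
          rw [card_insert_of_notMem hvns, hs.2, hec]; omega
        have h2 : insert v t = e := by
          apply Finset.eq_of_subset_of_card_le (insert_subset hve ht.1)
          rw [card_insert_of_notMem hvnt, ht.2, hec]; omega
        apply hst
        rw [← erase_insert hvns, ← erase_insert hvnt, h1, h2]
      · have hX : (insert v e).card = r + 1 := by
          rw [card_insert_of_notMem hve, hec]
        have hne1 : e ≠ insert v s := by
          intro h; exact hve (h ▸ mem_insert_self v s)
        have hne2 : e ≠ insert v t := by
          intro h; exact hve (h ▸ mem_insert_self v t)
        have hne3 : insert v s ≠ insert v t := by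
          intro h
          apply hst
          rw [← erase_insert hvns, ← erase_insert hvnt, h]
        have hsub : ({e, insert v s, insert v t} : Finset (Finset V))
            ⊆ H.filter (fun f => f ⊆ insert v e) := by
          intro f hf
          simp only [mem_insert, mem_singleton] at hf
          rcases hf with rfl | rfl | rfl <;> rw [mem_filter]
          · exact ⟨he, subset_insert _ _⟩
          · exact ⟨hvs, insert_subset_insert _ hs.1⟩
          · exact ⟨hvt, insert_subset_insert _ ht.1⟩
        have hcard3 : ({e, insert v s, insert v t} : Finset (Finset V)).card = 3 := by
          rw [card_insert_of_notMem (by simp [hne1, hne2]),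
            card_insert_of_notMem (by simp [hne3]), card_singleton]
        have h1 := Finset.card_le_card hsub
        have h2 := hspan (insert v e) hX
        rw [hcard3] at h1
        omega
    calc ∑ s ∈ Finset.powersetCard (r - 1) e, d s
        = ∑ s ∈ Finset.powersetCard (r - 1) e, (L s).card := by
          refine Finset.sum_congr rfl fun s hs => hlink s (mem_powersetCard.mp hs).2
      _ = ((Finset.powersetCard (r - 1) e).biUnion L).card :=
          (Finset.card_biUnion hdis).symm
      _ ≤ (univ : Finset V).card := card_le_card (subset_univ _)
      _ = n := card_univ
  -- counting identities
  have hfilterN : ∀ e ∈ H, N.filter (fun s => s ⊆ e) = Finset.powersetCard (r - 1) e := by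
    intro e _
    ext x
    simp only [hNdef, mem_filter, mem_powersetCard, subset_univ, true_and]
    tauto
  have hchoose : r.choose (r - 1) = r := by
    obtain ⟨m, rfl⟩ : ∃ m, r = m + 1 := ⟨r - 1, by omega⟩
    simp [Nat.choose_succ_self_right]
  have hA : ∑ s ∈ N, d s = r * H.card := by
    have h1 : ∀ s, d s = ∑ e ∈ H, if s ⊆ e then 1 else 0 := by
      intro s
      exact Finset.card_filter _ _
    calc ∑ s ∈ N, d s = ∑ s ∈ N, ∑ e ∈ H, if s ⊆ e then 1 else 0 :=
          Finset.sum_congr rfl fun s _ => h1 s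
      _ = ∑ e ∈ H, ∑ s ∈ N, if s ⊆ e then 1 else 0 := Finset.sum_comm
      _ = ∑ e ∈ H, r := by
          refine Finset.sum_congr rfl fun e he => ?_
          rw [← Finset.card_filter, hfilterN e he, Finset.card_powersetCard,
            huniform e he, hchoose]
      _ = r * H.card := by rw [Finset.sum_const, smul_eq_mul, mul_comm]
  have hC : ∑ s ∈ N, d s * d s ≤ n * H.card := by
    have h1 : ∀ s, d s * d s = ∑ e ∈ H, if s ⊆ e then d s else 0 := by
      intro s
      rw [← Finset.sum_filter, Finset.sum_const, smul_eq_mul]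
    calc ∑ s ∈ N, d s * d s = ∑ s ∈ N, ∑ e ∈ H, if s ⊆ e then d s else 0 :=
          Finset.sum_congr rfl fun s _ => h1 s
      _ = ∑ e ∈ H, ∑ s ∈ N, if s ⊆ e then d s else 0 := Finset.sum_comm
      _ = ∑ e ∈ H, ∑ s ∈ Finset.powersetCard (r - 1) e, d s := by
          refine Finset.sum_congr rfl fun e he => ?_
          rw [← Finset.sum_filter, hfilterN e he]
      _ ≤ ∑ e ∈ H, n := Finset.sum_le_sum fun e he => hB e he
      _ = n * H.card := by rw [Finset.sum_const, smul_eq_mul, mul_comm]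
  -- pass to rationals
  have hNcard : (N.card : ℚ) = (n.choose (r - 1) : ℚ) := by
    rw [hNdef, Finset.card_powersetCard, card_univ]
  have hr0 : (r : ℚ) ≠ 0 := Nat.cast_ne_zero.mpr (by omega)
  have c1 : (∑ s ∈ N, (d s : ℚ) * (d s : ℚ)) ≤ (n : ℚ) * H.card := by
    exact_mod_cast hC
  have c2 : (∑ s ∈ N, (d s : ℚ)) = (r : ℚ) * H.card := by
    exact_mod_cast hA
  set q : ℚ := (n : ℚ) / r with hq
  have key : ∑ s ∈ N, ((d s : ℚ) - q) ^ 2 ≤ 0 := by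
    have e0 : ∀ s ∈ N, ((d s : ℚ) - q) ^ 2
        = (d s : ℚ) * (d s : ℚ) - 2 * q * (d s : ℚ) + q ^ 2 := fun s _ => by ring
    have e1 : ∑ s ∈ N, ((d s : ℚ) - q) ^ 2
        = (∑ s ∈ N, (d s : ℚ) * (d s : ℚ)) - 2 * q * (∑ s ∈ N, (d s : ℚ))
          + (N.card : ℚ) * q ^ 2 := by
      rw [Finset.sum_congr rfl e0, Finset.sum_add_distrib, Finset.sum_sub_distrib,
        ← Finset.mul_sum, Finset.sum_const, nsmul_eq_mul]
    have h2 : 2 * q * ((r : ℚ) * H.card) = 2 * (n : ℚ) * H.card := by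
      rw [hq]; field_simp
    have h3 : ((n.choose (r - 1) : ℕ) : ℚ) * q ^ 2 = (n : ℚ) * H.card := by
      rw [hq, hmax]; field_simp
    rw [e1, c2, hNcard, h2, h3]
    linarith [c1]
  have hnneg : ∀ s ∈ N, (0 : ℚ) ≤ ((d s : ℚ) - q) ^ 2 := fun s _ => sq_nonneg _
  have hz := (Finset.sum_eq_zero_iff_of_nonneg hnneg).mp
    (le_antisymm key (Finset.sum_nonneg hnneg))
  have hs₀N : s₀ ∈ N := by
    rw [hNdef, Finset.mem_powersetCard_univ]; exact hs₀
  have h0 := hz s₀ hs₀N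
  have hfin : (d s₀ : ℚ) = q := by
    have := pow_eq_zero_iff (n := 2) (by norm_num) |>.mp h0
    linarith [sub_eq_zero.mp this]
  exact hfin
end

section
/- A tournament T on four vertices has the property that every cyclic permutation of its vertices has an odd number of reverse-oriented consecutive pairs if and only if T is isomorphic to one of the two tournaments consisting of a directed 3-cycle {a→b, b→c, c→a} together with a fourth vertex d dominating (or dominated by) all of a, b, c. -/
private def tf (b01 b02 b03 b12 b13 b23 : Bool) (i j : Fin 4) : Bool :=
  match i.val, j.val with
  | 0, 1 => b01 | 1, 0 => !b01
  | 0, 2 => b02 | 2, 0 => !b02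
  | 0, 3 => b03 | 3, 0 => !b03
  | 1, 2 => b12 | 2, 1 => !b12
  | 1, 3 => b13 | 3, 1 => !b13
  | 2, 3 => b23 | 3, 2 => !b23
  | _, _ => false

set_option synthInstance.maxSize 2000 in
set_option synthInstance.maxHeartbeats 1000000 in
set_option maxHeartbeats 4000000 in
private lemma aux (b01 b02 b03 b12 b13 b23 : Bool) :
    (∀ a b c d : Fin 4, a ≠ b → a ≠ c → a ≠ d → b ≠ c → b ≠ d → c ≠ d →
      Odd ((if tf b01 b02 b03 b12 b13 b23 b a then 1 else 0) +
        (if tf b01 b02 b03 b12 b13 b23 c b then 1 else 0) +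
        (if tf b01 b02 b03 b12 b13 b23 d c then 1 else 0) +
        (if tf b01 b02 b03 b12 b13 b23 a d then 1 else 0)))
    ↔ ∃ a b c d : Fin 4, a ≠ b ∧ a ≠ c ∧ a ≠ d ∧ b ≠ c ∧ b ≠ d ∧ c ≠ d ∧
        tf b01 b02 b03 b12 b13 b23 a b ∧ tf b01 b02 b03 b12 b13 b23 b c ∧
        tf b01 b02 b03 b12 b13 b23 c a ∧
        ((tf b01 b02 b03 b12 b13 b23 d a ∧ tf b01 b02 b03 b12 b13 b23 d b ∧
            tf b01 b02 b03 b12 b13 b23 d c) ∨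
          (tf b01 b02 b03 b12 b13 b23 a d ∧ tf b01 b02 b03 b12 b13 b23 b d ∧
            tf b01 b02 b03 b12 b13 b23 c d)) := by
  revert b01 b02 b03 b12 b13 b23
  simp only [Nat.odd_iff]
  decide

private lemma aux2 (f : Fin 4 → Fin 4 → Bool)
    (hirr : ∀ x, f x x = false) (htot : ∀ x y, x ≠ y → f x y = !f y x) :
    (∀ a b c d : Fin 4, a ≠ b → a ≠ c → a ≠ d → b ≠ c → b ≠ d → c ≠ d →
      Odd ((if f b a then 1 else 0) + (if f c b then 1 else 0) +
        (if f d c then 1 else 0) + (if f a d then 1 else 0)))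
    ↔ ∃ a b c d : Fin 4, a ≠ b ∧ a ≠ c ∧ a ≠ d ∧ b ≠ c ∧ b ≠ d ∧ c ≠ d ∧
        f a b ∧ f b c ∧ f c a ∧
        ((f d a ∧ f d b ∧ f d c) ∨ (f a d ∧ f b d ∧ f c d)) := by
  have h : f = tf (f 0 1) (f 0 2) (f 0 3) (f 1 2) (f 1 3) (f 2 3) := by
    funext i j
    fin_cases i <;> fin_cases j <;>
      first
        | exact hirr _
        | rfl
        | exact htot _ _ (by decide)
  rw [h]
  exact aux _ _ _ _ _ _

theorem stmt15 (V : Type*) [Fintype V] [DecidableEq V] (hV : Fintype.card V = 4)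
    (T : V → V → Prop) [DecidableRel T]
    (hirr : ∀ x, ¬ T x x) (htot : ∀ x y : V, x ≠ y → (T x y ↔ ¬ T y x)) :
    (∀ a b c d : V, a ≠ b → a ≠ c → a ≠ d → b ≠ c → b ≠ d → c ≠ d →
      Odd ((if T b a then 1 else 0) + (if T c b then 1 else 0) +
        (if T d c then 1 else 0) + (if T a d then 1 else 0)))
    ↔ ∃ a b c d : V, a ≠ b ∧ a ≠ c ∧ a ≠ d ∧ b ≠ c ∧ b ≠ d ∧ c ≠ d ∧
        T a b ∧ T b c ∧ T c a ∧
        ((T d a ∧ T d b ∧ T d c) ∨ (T a d ∧ T b d ∧ T c d)) := by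
  let e : V ≃ Fin 4 := Fintype.equivFinOfCardEq hV
  set f : Fin 4 → Fin 4 → Bool := fun i j => decide (T (e.symm i) (e.symm j)) with hf
  have key : ∀ i j, f i j = true ↔ T (e.symm i) (e.symm j) := by
    intro i j; simp [hf]
  have hirr' : ∀ x, f x x = false := by
    intro x; simpa [hf] using hirr (e.symm x)
  have htot' : ∀ x y, x ≠ y → f x y = !f y x := by
    intro x y hxy
    have hne : e.symm x ≠ e.symm y := fun h => hxy (e.symm.injective h)
    have h2 := htot (e.symm x) (e.symm y) hne
    rcases Decidable.em (T (e.symm x) (e.symm y)) with h | h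
    · have h3 : ¬ T (e.symm y) (e.symm x) := h2.mp h
      simp [hf, h, h3]
    · have h3 : T (e.symm y) (e.symm x) := by
        by_contra h4; exact h (h2.mpr h4)
      simp [hf, h, h3]
  have main := aux2 f hirr' htot'
  constructor
  · intro H
    have HLf : ∀ a b c d : Fin 4, a ≠ b → a ≠ c → a ≠ d → b ≠ c → b ≠ d → c ≠ d →
        Odd ((if f b a then 1 else 0) + (if f c b then 1 else 0) +
          (if f d c then 1 else 0) + (if f a d then 1 else 0)) := by
      intro a b c d hab hac had hbc hbd hcd
      have := H (e.symm a) (e.symm b) (e.symm c) (e.symm d)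
        (fun h => hab (e.symm.injective h)) (fun h => hac (e.symm.injective h))
        (fun h => had (e.symm.injective h)) (fun h => hbc (e.symm.injective h))
        (fun h => hbd (e.symm.injective h)) (fun h => hcd (e.symm.injective h))
      simpa [hf] using this
    obtain ⟨a, b, c, d, hab, hac, had, hbc, hbd, hcd, h1, h2, h3, h4⟩ := main.mp HLf
    refine ⟨e.symm a, e.symm b, e.symm c, e.symm d, ?_, ?_, ?_, ?_, ?_, ?_, ?_, ?_, ?_, ?_⟩
    · exact fun h => hab (e.symm.injective h)
    · exact fun h => hac (e.symm.injective h)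
    · exact fun h => had (e.symm.injective h)
    · exact fun h => hbc (e.symm.injective h)
    · exact fun h => hbd (e.symm.injective h)
    · exact fun h => hcd (e.symm.injective h)
    · exact (key _ _).mp h1
    · exact (key _ _).mp h2
    · exact (key _ _).mp h3
    · rcases h4 with ⟨u1, u2, u3⟩ | ⟨u1, u2, u3⟩
      · exact Or.inl ⟨(key _ _).mp u1, (key _ _).mp u2, (key _ _).mp u3⟩
      · exact Or.inr ⟨(key _ _).mp u1, (key _ _).mp u2, (key _ _).mp u3⟩
  · rintro ⟨a, b, c, d, hab, hac, had, hbc, hbd, hcd, h1, h2, h3, h4⟩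
    intro a' b' c' d' hab' hac' had' hbc' hbd' hcd'
    have HF := main.mpr ⟨e a, e b, e c, e d,
      fun h => hab (e.injective h), fun h => hac (e.injective h),
      fun h => had (e.injective h), fun h => hbc (e.injective h),
      fun h => hbd (e.injective h), fun h => hcd (e.injective h),
      by simpa [hf] using h1, by simpa [hf] using h2, by simpa [hf] using h3, by
        rcases h4 with ⟨u1, u2, u3⟩ | ⟨u1, u2, u3⟩
        · exact Or.inl ⟨by simpa [hf] using u1, by simpa [hf] using u2, by simpa [hf] using u3⟩
        · exact Or.inr ⟨by simpa [hf] using u1, by simpa [hf] using u2, by simpa [hf] using u3⟩⟩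
    have := HF (e a') (e b') (e c') (e d')
      (fun h => hab' (e.injective h)) (fun h => hac' (e.injective h))
      (fun h => had' (e.injective h)) (fun h => hbc' (e.injective h))
      (fun h => hbd' (e.injective h)) (fun h => hcd' (e.injective h))
    simpa [hf] using this
end

section
/- If two tournaments T and T' on the same vertex set are switching equivalent, then the 4-uniform hypergraphs H_T and H_{T'} they induce are equal. -/
/-- The tournament `T` switched with respect to `A`: edges between `A` and its
complement are reversed. -/
def switchRel {V : Type*} (T : V → V → Prop) (A : Set V) : V → V → Prop :=
  fun x y => ((x ∈ A ↔ y ∈ A) ∧ T x y) ∨ (¬ (x ∈ A ↔ y ∈ A) ∧ T y x)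

/-- The 4-uniform hypergraph associated to a tournament: hyperedges are 4-sets
consisting of a directed 3-cycle together with a vertex dominating or dominated
by the other three. -/
def HT {V : Type*} [DecidableEq V] (T : V → V → Prop) : Set (Finset V) :=
  { s | ∃ a b c d : V, a ≠ b ∧ a ≠ c ∧ a ≠ d ∧ b ≠ c ∧ b ≠ d ∧ c ≠ d ∧
      s = {a, b, c, d} ∧ T a b ∧ T b c ∧ T c a ∧
      ((T d a ∧ T d b ∧ T d c) ∨ (T a d ∧ T b d ∧ T c d)) }

def F6 (p01 p02 p03 p12 p13 p23 : Bool) : Fin 4 → Fin 4 → Bool :=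
  ![![false, p01, p02, p03],
    ![!p01, false, p12, p13],
    ![!p02, !p12, false, p23],
    ![!p03, !p13, !p23, false]]

def swB (f : Fin 4 → Fin 4 → Bool) (g : Fin 4 → Bool) : Fin 4 → Fin 4 → Bool :=
  fun i j => if g i = g j then f i j else f j i

def cycB (f : Fin 4 → Fin 4 → Bool) (i j k l : Fin 4) : Prop :=
  f i j = true ∧ f j k = true ∧ f k i = true ∧
  ((f l i = true ∧ f l j = true ∧ f l k = true) ∨
   (f i l = true ∧ f j l = true ∧ f k l = true))

def goodB (f : Fin 4 → Fin 4 → Bool) : Prop :=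
  ∃ i j k l : Fin 4, i ≠ j ∧ i ≠ k ∧ i ≠ l ∧ j ≠ k ∧ j ≠ l ∧ k ≠ l ∧ cycB f i j k l

instance (f : Fin 4 → Fin 4 → Bool) (i j k l : Fin 4) : Decidable (cycB f i j k l) := by
  unfold cycB; infer_instance

instance (f : Fin 4 → Fin 4 → Bool) : Decidable (goodB f) := by
  unfold goodB; infer_instance

lemma keyB : ∀ (p01 p02 p03 p12 p13 p23 : Bool) (g : Fin 4 → Bool),
    cycB (swB (F6 p01 p02 p03 p12 p13 p23) g) 0 1 2 3 →
    goodB (F6 p01 p02 p03 p12 p13 p23) := by decide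

open Classical in
lemma hf_aux {V : Type*} (T : V → V → Prop) (a b c d : V)
    (tba : T b a ↔ ¬ T a b) (tca : T c a ↔ ¬ T a c) (tda : T d a ↔ ¬ T a d)
    (tcb : T c b ↔ ¬ T b c) (tdb : T d b ↔ ¬ T b d) (tdc : T d c ↔ ¬ T c d) :
    ∀ i j : Fin 4, i ≠ j →
      (F6 (decide (T a b)) (decide (T a c)) (decide (T a d))
          (decide (T b c)) (decide (T b d)) (decide (T c d)) i j = true
        ↔ T (![a, b, c, d] i) (![a, b, c, d] j)) := by
  intro i j hij
  fin_cases i <;> fin_cases j <;> simp_all [F6]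

lemma hvne_aux {V : Type*} (a b c d : V)
    (hab : a ≠ b) (hac : a ≠ c) (had : a ≠ d) (hbc : b ≠ c) (hbd : b ≠ d) (hcd : c ≠ d) :
    ∀ i j : Fin 4, i ≠ j → ![a,b,c,d] i ≠ ![a,b,c,d] j := by
  have hba := hab.symm; have hca := hac.symm; have hda := had.symm
  have hcb := hbc.symm; have hdb := hbd.symm; have hdc := hcd.symm
  intro i j hij
  fin_cases i <;> fin_cases j <;> simp_all

lemma hset_aux {V : Type*} [DecidableEq V] (a b c d : V) :
    ∀ i j k l : Fin 4, i ≠ j → i ≠ k → i ≠ l → j ≠ k → j ≠ l → k ≠ l →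
      ({a, b, c, d} : Finset V) =
        {![a,b,c,d] i, ![a,b,c,d] j, ![a,b,c,d] k, ![a,b,c,d] l} := by
  intro i j k l hij hik hil hjk hjl hkl
  fin_cases i <;> fin_cases j <;> fin_cases k <;> fin_cases l <;> simp_all <;>
    (ext x; simp; tauto)

open Classical in
lemma hg_aux {V : Type*} (A : Set V) (a b c d : V) :
    ∀ i j : Fin 4,
      ((![decide (a ∈ A), decide (b ∈ A), decide (c ∈ A), decide (d ∈ A)] : Fin 4 → Bool) i =
        ![decide (a ∈ A), decide (b ∈ A), decide (c ∈ A), decide (d ∈ A)] j)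
        ↔ (![a,b,c,d] i ∈ A ↔ ![a,b,c,d] j ∈ A) := by
  intro i j
  fin_cases i <;> fin_cases j <;> simp [decide_eq_decide]

open Classical in
lemma sub_lemma {V : Type*} [DecidableEq V] (T : V → V → Prop)
    (hirr : ∀ x, ¬ T x x) (htot : ∀ x y : V, x ≠ y → (T x y ↔ ¬ T y x))
    (A : Set V) : HT (switchRel T A) ⊆ HT T := by
  rintro s ⟨a, b, c, d, hab, hac, had, hbc, hbd, hcd, hseq, h1, h2, h3, h4⟩
  have hf := hf_aux T a b c d (htot b a hab.symm) (htot c a hac.symm) (htot d a had.symm)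
    (htot c b hbc.symm) (htot d b hbd.symm) (htot d c hcd.symm)
  have hvne := hvne_aux a b c d hab hac had hbc hbd hcd
  have hg := hg_aux A a b c d
  set f : Fin 4 → Fin 4 → Bool :=
    F6 (decide (T a b)) (decide (T a c)) (decide (T a d))
       (decide (T b c)) (decide (T b d)) (decide (T c d))
  set g : Fin 4 → Bool := ![decide (a ∈ A), decide (b ∈ A), decide (c ∈ A), decide (d ∈ A)]
  have hsw : ∀ i j : Fin 4, i ≠ j →
      (swB f g i j = true ↔ switchRel T A (![a,b,c,d] i) (![a,b,c,d] j)) := by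
    intro i j hij
    by_cases hc : g i = g j
    · rw [swB, if_pos hc, hf i j hij]
      have h' := (hg i j).mp hc
      unfold switchRel; tauto
    · rw [swB, if_neg hc, hf j i hij.symm]
      have h' : ¬ (![a,b,c,d] i ∈ A ↔ ![a,b,c,d] j ∈ A) := fun h => hc ((hg i j).mpr h)
      unfold switchRel; tauto
  have hcyc : cycB (swB f g) 0 1 2 3 := by
    refine ⟨?_, ?_, ?_, ?_⟩
    · exact (hsw 0 1 (by decide)).mpr (by simpa using h1)
    · exact (hsw 1 2 (by decide)).mpr (by simpa using h2)
    · exact (hsw 2 0 (by decide)).mpr (by simpa using h3)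
    · rcases h4 with ⟨p, q, r⟩ | ⟨p, q, r⟩
      · exact Or.inl ⟨(hsw 3 0 (by decide)).mpr (by simpa using p),
          (hsw 3 1 (by decide)).mpr (by simpa using q),
          (hsw 3 2 (by decide)).mpr (by simpa using r)⟩
      · exact Or.inr ⟨(hsw 0 3 (by decide)).mpr (by simpa using p),
          (hsw 1 3 (by decide)).mpr (by simpa using q),
          (hsw 2 3 (by decide)).mpr (by simpa using r)⟩
  obtain ⟨i, j, k, l, hij, hik, hil, hjk, hjl, hkl, c1, c2, c3, c4⟩ :=
    keyB _ _ _ _ _ _ g hcyc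
  refine ⟨![a,b,c,d] i, ![a,b,c,d] j, ![a,b,c,d] k, ![a,b,c,d] l,
    hvne i j hij, hvne i k hik, hvne i l hil, hvne j k hjk, hvne j l hjl, hvne k l hkl,
    by rw [hseq]; exact hset_aux a b c d i j k l hij hik hil hjk hjl hkl,
    (hf i j hij).mp c1, (hf j k hjk).mp c2, (hf k i hik.symm).mp c3, ?_⟩
  rcases c4 with ⟨p, q, r⟩ | ⟨p, q, r⟩
  · exact Or.inl ⟨(hf l i hil.symm).mp p, (hf l j hjl.symm).mp q, (hf l k hkl.symm).mp r⟩
  · exact Or.inr ⟨(hf i l hil).mp p, (hf j l hjl).mp q, (hf k l hkl).mp r⟩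

theorem stmt17 (V : Type*) [DecidableEq V] (T : V → V → Prop)
    (hirr : ∀ x, ¬ T x x) (htot : ∀ x y : V, x ≠ y → (T x y ↔ ¬ T y x))
    (A : Set V) :
    HT (switchRel T A) = HT T := by
  have hirr' : ∀ x, ¬ switchRel T A x x := by
    intro x h
    rcases h with ⟨_, h⟩ | ⟨_, h⟩ <;> exact hirr x h
  have htot' : ∀ x y : V, x ≠ y → (switchRel T A x y ↔ ¬ switchRel T A y x) := by
    intro x y hxy
    have := htot x y hxy
    by_cases hx : x ∈ A <;> by_cases hy : y ∈ A <;> simp [switchRel, hx, hy] <;> tauto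
  have hinv : switchRel (switchRel T A) A = T := by
    funext x y
    apply propext
    by_cases hx : x ∈ A <;> by_cases hy : y ∈ A <;> simp [switchRel, hx, hy]
  apply Set.Subset.antisymm
  · exact sub_lemma T hirr htot A
  · have h := sub_lemma (switchRel T A) hirr' htot' A
    rw [hinv] at h
    exact h
end

section
/- Let H be a 4-uniform hypergraph on vertex set V with H = H_T for some tournament T. Then for every pair of distinct vertices u, v ∈ V, the link graph N_H(u,v) = {{x,y} : {u,v,x,y} ∈ H} on V\{u,v} contains no odd cycle (i.e., it is bipartite). -/
lemma card3' {V : Type*} [DecidableEq V] (a b c : V) : ({a, b, c} : Finset V).card ≤ 3 := by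
  have h1 := Finset.card_insert_le a ({b, c} : Finset V)
  have h2 := Finset.card_insert_le b ({c} : Finset V)
  simp only [Finset.card_singleton] at h2
  omega

lemma ne_of_card4 {V : Type*} [DecidableEq V] {u v x y : V}
    (h : ({u, v, x, y} : Finset V).card = 4)
    {p q r : V} (e : ∀ z ∈ ({u, v, x, y} : Finset V), z = p ∨ z = q ∨ z = r) : False := by
  have hsub : ({u, v, x, y} : Finset V) ⊆ {p, q, r} := by
    intro z hz
    simp only [Finset.mem_insert, Finset.mem_singleton]
    exact e z hz
  have := (Finset.card_le_card hsub).trans (card3' p q r)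
  omega

lemma four_distinct {V : Type*} [DecidableEq V] {u v x y : V}
    (h : ({u, v, x, y} : Finset V).card = 4) :
    u ≠ v ∧ u ≠ x ∧ u ≠ y ∧ v ≠ x ∧ v ≠ y ∧ x ≠ y := by
  refine ⟨fun e => ne_of_card4 h (p := v) (q := x) (r := y) ?_,
          fun e => ne_of_card4 h (p := v) (q := x) (r := y) ?_,
          fun e => ne_of_card4 h (p := v) (q := x) (r := y) ?_,
          fun e => ne_of_card4 h (p := u) (q := x) (r := y) ?_,
          fun e => ne_of_card4 h (p := u) (q := x) (r := y) ?_,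
          fun e => ne_of_card4 h (p := u) (q := v) (r := y) ?_⟩ <;>
    (intro z hz; simp only [Finset.mem_insert, Finset.mem_singleton] at hz;
     rcases hz with rfl | rfl | rfl | rfl <;> tauto)

set_option maxHeartbeats 2000000 in
theorem stmt19 (V : Type*) [DecidableEq V] (T : V → V → Prop)
    (hirr : ∀ x, ¬ T x x) (htot : ∀ x y : V, x ≠ y → (T x y ↔ ¬ T y x))
    (H : Set (Finset V)) (hH : H = HT T)
    (u v : V) (huv : u ≠ v) :
    ∃ f : V → Bool, ∀ x y : V, ({u, v, x, y} : Finset V) ∈ H → f x ≠ f y := by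
  classical
  refine ⟨fun w => decide (T u w ↔ T v w), ?_⟩
  intro x y hxy
  rw [hH] at hxy
  obtain ⟨a, b, c, d, hab, hac, had, hbc, hbd, hcd, hset, hTab, hTbc, hTca, hd⟩ := hxy
  simp only [ne_eq, decide_eq_decide]
  have hcard4 : ({u, v, x, y} : Finset V).card = 4 := by
    rw [hset]
    rw [Finset.card_insert_of_notMem (by simp [hab, hac, had]),
        Finset.card_insert_of_notMem (by simp [hbc, hbd]),
        Finset.card_insert_of_notMem (by simp [hcd]),
        Finset.card_singleton]
  obtain ⟨huv', hux, huy, hvx, hvy, hxy'⟩ := four_distinct hcard4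
  have hmem : ∀ z ∈ ({u, v, x, y} : Finset V), z = a ∨ z = b ∨ z = c ∨ z = d := by
    intro z hz
    rw [hset] at hz
    simpa using hz
  have hu := hmem u (by simp)
  have hv := hmem v (by simp)
  have hx := hmem x (by simp)
  have hy := hmem y (by simp)
  have nba : ¬ T b a := (htot a b hab).mp hTab
  have ncb : ¬ T c b := (htot b c hbc).mp hTbc
  have nac : ¬ T a c := (htot c a hac.symm).mp hTca
  clear hmem hcard4 hset hH hirr huv
  rcases hd with ⟨h1, h2, h3⟩ | ⟨h1, h2, h3⟩
  · have nad : ¬ T a d := (htot d a had.symm).mp h1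
    have nbd : ¬ T b d := (htot d b hbd.symm).mp h2
    have ncd : ¬ T c d := (htot d c hcd.symm).mp h3
    clear htot
    rcases hu with rfl | rfl | rfl | rfl <;>
      rcases hv with rfl | rfl | rfl | rfl <;>
        rcases hx with rfl | rfl | rfl | rfl <;>
          rcases hy with rfl | rfl | rfl | rfl <;>
            first
              | exact absurd rfl (by assumption)
              | simp [hTab, hTbc, hTca, h1, h2, h3, nba, ncb, nac, nad, nbd, ncd]
  · have nda : ¬ T d a := (htot a d had).mp h1
    have ndb : ¬ T d b := (htot b d hbd).mp h2
    have ndc : ¬ T d c := (htot c d hcd).mp h3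
    clear htot
    rcases hu with rfl | rfl | rfl | rfl <;>
      rcases hv with rfl | rfl | rfl | rfl <;>
        rcases hx with rfl | rfl | rfl | rfl <;>
          rcases hy with rfl | rfl | rfl | rfl <;>
            first
              | exact absurd rfl (by assumption)
              | simp [hTab, hTbc, hTca, h1, h2, h3, nba, ncb, nac, nda, ndb, ndc]
end
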